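/- Let p ∈ ℕ, let Ω ∈ ℝ^{p×p} be symmetric positive definite, let β, x, δ ∈ ℝ^p and β₀ ∈ ℝ, let F(t) = 1/(1+e^{−t}), and let φ(v) = exp(−½ v'Ω⁻¹v). Then F(β₀ + x'β) · φ(δ − Ωβ − x) / [ F(β₀ + x'β) · φ(δ − Ωβ − x) + (1 − F(β₀ + x'β)) · φ(δ − x) ] = F( β₀ + δ'β − 0.5 β'Ωβ ). In particular, the left-hand side does not depend on x, which is the algebraic identity underlying the conditional-score sufficiency reduction P(Y = 1 | Δ = δ) = F(β̃₀ + (δ − 0.5Ωβ̃)'β̃) in the logistic measurement-error model. -/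

import Mathlib

/-!
In log-odds form Bayes' rule says that the posterior log-odds are the prior log-odds plus the
log-likelihood ratio. Expanding the Gaussian quadratic form, the log-likelihood ratio of the
densities centred at `x + Ωβ` and at `x` is `(δ - x)'β - ½ β'Ωβ`, and its `-x'β` cancels the
`x'β` in the prior log-odds `β₀ + x'β`.
-/

open Matrix

/-- The logistic function `F(t) = 1/(1+e^{-t})`. -/
noncomputable def logistic (t : ℝ) : ℝ := 1 / (1 + Real.exp (-t))

theorem logistic_mul_exp_div (a s t : ℝ) :
    logistic a * Real.exp s / (logistic a * Real.exp s + (1 - logistic a) * Real.exp t) =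
      logistic (a + s - t) := by
  have hexp : Real.exp (-(a + s - t)) = Real.exp (-a) * Real.exp t / Real.exp s := by
    rw [← Real.exp_add, ← Real.exp_sub]; ring_nf
  have hpos : 0 < Real.exp s + Real.exp (-a) * Real.exp t := by positivity
  unfold logistic
  rw [hexp]
  field_simp
  rw [add_sub_cancel_left, div_self hpos.ne']

theorem Matrix.dotProduct_inv_mulVec_sub_mulVec {n R : Type*} [Fintype n] [DecidableEq n]
    [CommRing R] {Ω : Matrix n n R} (hsymm : Ω.IsSymm) (hdet : IsUnit Ω.det) (u β : n → R) :
    (u - Ω *ᵥ β) ⬝ᵥ Ω⁻¹ *ᵥ (u - Ω *ᵥ β) = u ⬝ᵥ Ω⁻¹ *ᵥ u - 2 * (u ⬝ᵥ β) + β ⬝ᵥ Ω *ᵥ β := by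
  have hcross : Ω *ᵥ β ⬝ᵥ Ω⁻¹ *ᵥ u = u ⬝ᵥ β := by
    nth_rw 1 [← hsymm.eq]
    rw [mulVec_transpose, ← dotProduct_mulVec, mulVec_mulVec, mul_nonsing_inv Ω hdet,
      one_mulVec, dotProduct_comm]
  rw [mulVec_sub, mulVec_mulVec, nonsing_inv_mul Ω hdet, one_mulVec, sub_dotProduct,
    dotProduct_sub, dotProduct_sub, hcross, dotProduct_comm (Ω *ᵥ β) β]
  ring

/-- the algebraic identity underlying the conditional-score sufficiency
reduction `P(Y = 1 | Δ = δ) = F(β̃₀ + (δ − 0.5Ωβ̃)'β̃)` in the logistic measurement-error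
model.  Here `φ(v) = exp(−½ v'Ω⁻¹v)` is the unnormalized `N(0, Ω)` density. -/
theorem stmt_9 (p : ℕ) (Ω : Matrix (Fin p) (Fin p) ℝ) (hΩ : Ω.PosDef)
    (β x δ : Fin p → ℝ) (β₀ : ℝ) :
    logistic (β₀ + x ⬝ᵥ β) *
        Real.exp (-(1 / 2) * ((δ - Ω.mulVec β - x) ⬝ᵥ Ω⁻¹.mulVec (δ - Ω.mulVec β - x))) /
      (logistic (β₀ + x ⬝ᵥ β) *
          Real.exp (-(1 / 2) * ((δ - Ω.mulVec β - x) ⬝ᵥ Ω⁻¹.mulVec (δ - Ω.mulVec β - x))) +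
        (1 - logistic (β₀ + x ⬝ᵥ β)) *
          Real.exp (-(1 / 2) * ((δ - x) ⬝ᵥ Ω⁻¹.mulVec (δ - x)))) =
      logistic (β₀ + δ ⬝ᵥ β - 0.5 * (β ⬝ᵥ Ω.mulVec β)) := by
  rw [logistic_mul_exp_div, sub_right_comm δ, dotProduct_inv_mulVec_sub_mulVec
    (isHermitian_iff_isSymm.mp hΩ.isHermitian) hΩ.det_pos.ne'.isUnit]
  congr 1
  rw [sub_dotProduct δ x β]
  ring
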